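/- Let q be a prime power and let k, n, m be integers with 1 < k < n, 5 ≤ n ≤ m. Set s = max{⌊n/2^{k−1}⌋, 1} and s⊥ = max{⌊n/2^{n−k−1}⌋, 1}. Let C be a nondegenerate [n,k]_{q^m/q} rank-metric code with |WS(C)| = n − s + 1 (i.e., C is L_rk-optimal). Then the dual code C⊥ is degenerate, or C⊥ is not L_rk-optimal, i.e., |WS(C⊥)| ≠ n − s⊥ + 1. -/

import Mathlib

/-- The rank weight of a vector `v ∈ L^n`, where `L/K` is a field extension:
the `K`-dimension of the `K`-span of the entries of `v`. -/
noncomputable def rankWeight (K : Type*) [Field K] {L : Type*} [Field L] [Algebra K L]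
    {n : ℕ} (v : Fin n → L) : ℕ :=
  Module.finrank K (Submodule.span K (Set.range v))

/-- The weight spectrum of a rank-metric code `C ⊆ L^n`: the set of rank weights of its
nonzero codewords. -/
noncomputable def weightSpectrum (K : Type*) [Field K] {L : Type*} [Field L] [Algebra K L]
    {n : ℕ} (C : Submodule L (Fin n → L)) : Set ℕ :=
  {w | ∃ c ∈ C, c ≠ 0 ∧ rankWeight K c = w}

/-- A rank-metric code `C ⊆ L^n` is nondegenerate if for every nonzero `x ∈ K^n` there is a
codeword `c ∈ C` with `∑ j, x j • c j ≠ 0`. -/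
def IsNondegenerate (K : Type*) [Field K] {L : Type*} [Field L] [Algebra K L]
    {n : ℕ} (C : Submodule L (Fin n → L)) : Prop :=
  ∀ x : Fin n → K, x ≠ 0 → ∃ c ∈ C, (∑ j, x j • c j) ≠ 0


/-! If `|WS(C)| = n` then `WS(C) = {1, …, n}`, so `C` contains a word `x • α` with
`x ∈ K^n \ {0}` and `α ∈ L^×`; every word `d` orthogonal to it satisfies `∑ j, x j • d j = 0`,
so `C⊥` is degenerate. Symmetrically, if `|WS(C⊥)| = n` then `C` is degenerate. Since
`n² < 2ⁿ` for `n ≥ 5`, the numbers `2^k` and `2^(n-k)` cannot both be at most `n`, so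
`s = 1` or `s⊥ = 1`: one of the two optimality counts `n - s + 1`, `n - s⊥ + 1` is `n`. -/

theorem mul_self_lt_two_pow {n : ℕ} (hn : 5 ≤ n) : n * n < 2 ^ n := by
  induction n, hn using Nat.le_induction with
  | base => norm_num
  | succ n _ ih => rw [pow_succ]; nlinarith

theorem lt_two_pow_or_lt_two_pow {n a b : ℕ} (hn : n * n < 2 ^ n) (hab : n ≤ a + b) :
    n < 2 ^ a ∨ n < 2 ^ b := by
  by_contra! h
  have := calc 2 ^ n ≤ 2 ^ (a + b) := Nat.pow_le_pow_right two_pos hab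
    _ = 2 ^ a * 2 ^ b := pow_add 2 a b
    _ ≤ n * n := Nat.mul_le_mul h.1 h.2
  omega

theorem div_two_pow_le_one_iff {n j : ℕ} : n / 2 ^ j ≤ 1 ↔ n < 2 ^ (j + 1) := by
  rw [← Nat.lt_succ_iff, Nat.div_lt_iff_lt_mul (by positivity), pow_succ, mul_comm]

theorem div_two_pow_pred_le_one_or {n : ℕ} (hn : 5 ≤ n) (k : ℕ) :
    n / 2 ^ (k - 1) ≤ 1 ∨ n / 2 ^ (n - k - 1) ≤ 1 := by
  simp only [div_two_pow_le_one_iff]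
  exact lt_two_pow_or_lt_two_pow (mul_self_lt_two_pow hn) (by omega)

section RankMetric

variable {K L : Type*} [Field K] [Field L] [Algebra K L] {n : ℕ}

theorem rankWeight_le (v : Fin n → L) : rankWeight K v ≤ n :=
  (finrank_range_le_card v).trans_eq (Fintype.card_fin n)

theorem rankWeight_eq_zero_iff {v : Fin n → L} : rankWeight K v = 0 ↔ v = 0 := by
  have := FiniteDimensional.span_of_finite K (Set.finite_range v)
  rw [rankWeight, Submodule.finrank_eq_zero, Submodule.span_eq_bot, Set.forall_mem_range,
    funext_iff]
  rfl

theorem weightSpectrum_subset_Icc (C : Submodule L (Fin n → L)) :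
    weightSpectrum K C ⊆ Set.Icc 1 n := by
  rintro _ ⟨c, -, hc, rfl⟩
  exact ⟨Nat.one_le_iff_ne_zero.2 (rankWeight_eq_zero_iff.not.2 hc), rankWeight_le c⟩

theorem one_mem_weightSpectrum_of_ncard_eq {C : Submodule L (Fin n → L)} (hn : 1 ≤ n)
    (h : (weightSpectrum K C).ncard = n) : 1 ∈ weightSpectrum K C := by
  have hIcc : weightSpectrum K C = Set.Icc 1 n :=
    Set.eq_of_subset_of_ncard_le (weightSpectrum_subset_Icc C)
      (by rw [h, Set.ncard_eq_toFinset_card', Set.toFinset_Icc, Nat.card_Icc]; omega)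
      (Set.finite_Icc 1 n)
  exact hIcc ▸ ⟨le_rfl, hn⟩

theorem exists_eq_smul_of_rankWeight_eq_one {v : Fin n → L} (hv : rankWeight K v = 1) :
    ∃ α : L, α ≠ 0 ∧ ∃ x : Fin n → K, x ≠ 0 ∧ ∀ j, v j = x j • α := by
  obtain ⟨α, hα, hspan⟩ := finrank_eq_one_iff'.1 hv
  choose x hx using fun j => hspan ⟨v j, Submodule.subset_span (Set.mem_range_self j)⟩
  have hvx : ∀ j, v j = x j • (α : L) := fun j => congrArg Subtype.val (hx j).symm
  refine ⟨α, by simpa using hα, x, ?_, hvx⟩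
  rintro rfl
  have hv0 : v = 0 := funext fun j => by simp [hvx j]
  exact one_ne_zero (hv.symm.trans (rankWeight_eq_zero_iff.2 hv0))

theorem not_isNondegenerate_of_rankWeight_eq_one {D : Submodule L (Fin n → L)}
    {v : Fin n → L} (hv : rankWeight K v = 1) (horth : ∀ d ∈ D, ∑ j, v j * d j = 0) :
    ¬ IsNondegenerate K D := by
  obtain ⟨α, hα, x, hx, hvx⟩ := exists_eq_smul_of_rankWeight_eq_one hv
  intro hD
  obtain ⟨d, hd, hsum⟩ := hD x hx
  have : (∑ j, x j • d j) * α = 0 := by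
    rw [← horth d hd, Finset.sum_mul]
    refine Finset.sum_congr rfl fun j _ => ?_
    rw [hvx j, smul_mul_assoc, smul_mul_assoc, mul_comm]
  exact (mul_ne_zero hsum hα) this

end RankMetric

theorem dual_not_Lrk_optimal_of_le_general (n k : ℕ) (hn5 : 5 ≤ n)
    (K L : Type) [Field K] [Field L] [Algebra K L]
    (C D : Submodule L (Fin n → L))
    (hnd : IsNondegenerate K C)
    (hD : ∀ d : Fin n → L, d ∈ D ↔ ∀ c ∈ C, (∑ j, c j * d j) = 0)
    (hopt : (weightSpectrum K C).ncard = n - max (n / 2 ^ (k - 1)) 1 + 1) :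
    ¬ IsNondegenerate K D ∨
      (weightSpectrum K D).ncard ≠ n - max (n / 2 ^ (n - k - 1)) 1 + 1 := by
  have hn : 1 ≤ n := by omega
  rcases div_two_pow_pred_le_one_or hn5 k with hC | hD'
  · left
    rw [max_eq_right hC, Nat.sub_add_cancel hn] at hopt
    obtain ⟨c, hc, -, hc1⟩ := one_mem_weightSpectrum_of_ncard_eq hn hopt
    exact not_isNondegenerate_of_rankWeight_eq_one hc1 fun d hd => (hD d).1 hd c hc
  · right
    rw [max_eq_right hD', Nat.sub_add_cancel hn]
    intro hoptD
    obtain ⟨d, hd, -, hd1⟩ := one_mem_weightSpectrum_of_ncard_eq hn hoptD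
    refine not_isNondegenerate_of_rankWeight_eq_one hd1 (fun c hc => ?_) hnd
    simpa only [mul_comm] using (hD d).1 hd c hc

/-- Duality, case 5 ≤ n ≤ m: if C is a nondegenerate L_rk-optimal [n,k]_{q^m/q} code, then its
dual code D = C⊥ is degenerate or not L_rk-optimal. -/
theorem dual_not_Lrk_optimal_of_le (q m n k : ℕ) (hq : IsPrimePow q)
    (hk : 1 < k) (hkn : k < n) (hn5 : 5 ≤ n) (hnm : n ≤ m)
    (K L : Type) [Field K] [Fintype K] [Field L] [Algebra K L]
    (hcard : Fintype.card K = q) (hdeg : Module.finrank K L = m)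
    (C D : Submodule L (Fin n → L))
    (hdim : Module.finrank L C = k) (hnd : IsNondegenerate K C)
    (hD : ∀ d : Fin n → L, d ∈ D ↔ ∀ c ∈ C, (∑ j, c j * d j) = 0)
    (hopt : (weightSpectrum K C).ncard = n - max (n / 2 ^ (k - 1)) 1 + 1) :
    ¬ IsNondegenerate K D ∨
      (weightSpectrum K D).ncard ≠ n - max (n / 2 ^ (n - k - 1)) 1 + 1 :=
  dual_not_Lrk_optimal_of_le_general n k hn5 K L C D hnd hD hopt
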